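/- Fix w_max > 0 and ρ > 0. For every initial configuration (p, θ₀) ∈ ℝ² × ℝ and every target point q ∈ ℝ², the minimum travel time of a differential-drive robot satisfies τ_DD((p, θ₀), q) ≤ ‖p − q‖ / w_max + π ρ / (2 w_max); i.e., there exist admissible controls steering the robot from (p, θ₀) to position q within that time. -/

import Mathlib

open MeasureTheory Filter Topology Real

noncomputable section

/-- The plane `ℝ²` with the Euclidean norm. -/
abbrev Plane : Type := EuclideanSpace ℝ (Fin 2)

/-- A differential-drive (DD) trajectory with wheel-speed bound `wmax` and half-axle
length `ρ`: coordinates `x y θ` driven by measurable wheel-speed controls `wl, wr`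
bounded by `wmax`, satisfying (in integral form) `x' = (wl+wr)/2 ⬝ cos θ`,
`y' = (wl+wr)/2 ⬝ sin θ`, `θ' = (wr - wl)/(2ρ)`. -/
def IsDDTraj (wmax ρ : ℝ) (x y θ : ℝ → ℝ) : Prop :=
  ∃ wl wr : ℝ → ℝ, Measurable wl ∧ Measurable wr ∧
    (∀ t, |wl t| ≤ wmax) ∧ (∀ t, |wr t| ≤ wmax) ∧
    (∀ t, x t = x 0 + ∫ s in (0:ℝ)..t, (wl s + wr s) / 2 * Real.cos (θ s)) ∧
    (∀ t, y t = y 0 + ∫ s in (0:ℝ)..t, (wl s + wr s) / 2 * Real.sin (θ s)) ∧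
    (∀ t, θ t = θ 0 + ∫ s in (0:ℝ)..t, (wr s - wl s) / (2 * ρ))

/-- Minimum travel time of a DD robot from configuration `(p, θ₀)` to the point `q`. -/
def tauDD (wmax ρ : ℝ) (p : Plane) (θ₀ : ℝ) (q : Plane) : ℝ :=
  sInf {T : ℝ | 0 ≤ T ∧ ∃ x y θ : ℝ → ℝ, IsDDTraj wmax ρ x y θ ∧
    x 0 = p 0 ∧ y 0 = p 1 ∧ θ 0 = θ₀ ∧ x T = q 0 ∧ y T = q 1}

/-- Reachable set at time `t` of a DD robot starting at configuration `(p, θ₀)`. -/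
def reachDD (wmax ρ : ℝ) (p : Plane) (θ₀ : ℝ) (t : ℝ) : Set Plane :=
  {q | tauDD wmax ρ p θ₀ q ≤ t}

/-!
The robot can drive backwards, so only its heading modulo `π` matters: turning in place by some
`δ` with `|δ| ≤ π / 2` makes the axis of motion parallel to `q - p`, and then driving straight at
speed `±wmax` takes `‖p - q‖ / wmax`. We let the turn always last `π ρ / (2 wmax)`, with wheel
speeds `∓2 δ wmax / π`, which are admissible because `|δ| ≤ π / 2`. Both phases use constant
controls, so the trajectory is computed from the integral of a step function.
-/

lemma intervalIntegrable_ite_lt (a b c t₀ t : ℝ) :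
    IntervalIntegrable (fun s => if s < c then a else b) volume t₀ t := by
  refine (IntervalIntegrable.mono_fun (intervalIntegrable_const (c := max |a| |b|)) ?_ ?_)
  · exact (measurable_const.ite measurableSet_Iio measurable_const).aestronglyMeasurable
  · filter_upwards with s
    split_ifs <;> simp [le_abs]

lemma integral_ite_lt (a b c t₀ t : ℝ) :
    ∫ s in t₀..t, (if s < c then a else b) =
      (a * min t c + b * (t - min t c)) - (a * min t₀ c + b * (t₀ - min t₀ c)) := by
  refine intervalIntegral.integral_eq_sub_of_hasDeriv_right
    (f := fun t => a * min t c + b * (t - min t c)) (by fun_prop) (fun x _ => ?_)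
    (intervalIntegrable_ite_lt a b c t₀ t)
  split_ifs with hx
  · have hev : (fun t => a * min t c + b * (t - min t c)) =ᶠ[𝓝 x] fun t => a * t := by
      filter_upwards [eventually_lt_nhds hx] with t ht
      rw [min_eq_left ht.le]; ring
    have : HasDerivAt (fun t => a * t) a x := by simpa using (hasDerivAt_id x).const_mul a
    exact (this.congr_of_eventuallyEq hev).hasDerivWithinAt
  · have hc : c ≤ x := not_lt.1 hx
    have : HasDerivAt (fun t => a * c + b * (t - c)) b x := by
      simpa using ((hasDerivAt_id x).sub_const c).const_mul b |>.const_add (a * c)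
    refine this.hasDerivWithinAt.congr (fun t ht => ?_) ?_
    · rw [min_eq_right (hc.trans (le_of_lt ht))]
    · rw [min_eq_right hc]

lemma isDDTraj_rotate_then_drive {wmax u v : ℝ} (ρ : ℝ) (hu : |u| ≤ wmax) (hv : |v| ≤ wmax)
    (x₀ y₀ θ₀ t₁ : ℝ) :
    IsDDTraj wmax ρ (fun t => x₀ + v * cos (θ₀ + u / ρ * t₁) * (t - min t t₁))
      (fun t => y₀ + v * sin (θ₀ + u / ρ * t₁) * (t - min t t₁))
      (fun t => θ₀ + u / ρ * min t t₁) := by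
  have hspeed : ∀ (f : ℝ → ℝ) s, ((if s < t₁ then -u else v) + (if s < t₁ then u else v)) / 2 *
      f (θ₀ + u / ρ * min s t₁) = if s < t₁ then 0 else v * f (θ₀ + u / ρ * t₁) := by
    intro f s
    split_ifs with h
    · ring
    · rw [min_eq_right (not_lt.1 h)]; ring
  have hrate : ∀ s, ((if s < t₁ then u else v) - if s < t₁ then -u else v) / (2 * ρ) =
      if s < t₁ then u / ρ else 0 := by
    intro s
    split_ifs <;> ring
  refine ⟨fun s => if s < t₁ then -u else v, fun s => if s < t₁ then u else v,
    measurable_const.ite measurableSet_Iio measurable_const,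
    measurable_const.ite measurableSet_Iio measurable_const,
    fun s => by dsimp only; split_ifs <;> simpa, fun s => by dsimp only; split_ifs <;> simpa,
    fun t => ?_, fun t => ?_, fun t => ?_⟩ <;>
  · simp only [hspeed, hrate, integral_ite_lt]
    ring

lemma exists_int_abs_sub_mul_le {c : ℝ} (hc : 0 < c) (x : ℝ) : ∃ k : ℤ, |x - k * c| ≤ c / 2 := by
  refine ⟨round (x / c), ?_⟩
  have h := abs_sub_round (x / c)
  calc |x - round (x / c) * c| = |(x / c - round (x / c)) * c| := by
        rw [sub_mul, div_mul_cancel₀ x hc.ne']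
    _ = |x / c - round (x / c)| * c := by rw [abs_mul, abs_of_pos hc]
    _ ≤ 1 / 2 * c := by gcongr
    _ = c / 2 := by ring

lemma exists_heading_parallel (θ₀ : ℝ) (v : Plane) : ∃ δ s : ℝ, |δ| ≤ π / 2 ∧ |s| = 1 ∧
    ‖v‖ * cos (θ₀ + δ) = s * v 0 ∧ ‖v‖ * sin (θ₀ + δ) = s * v 1 := by
  set z : ℂ := Complex.orthonormalBasisOneI.repr.symm v
  have hz : ‖z‖ = ‖v‖ := LinearIsometryEquiv.norm_map _ _
  have hre : z.re = v 0 := by simp [z]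
  have him : z.im = v 1 := by simp [z]
  obtain ⟨k, hk⟩ := exists_int_abs_sub_mul_le pi_pos (z.arg - θ₀)
  have hθ : θ₀ + (z.arg - θ₀ - k * π) = z.arg - k * π := by ring
  refine ⟨z.arg - θ₀ - k * π, (-1) ^ k, hk, by simp, ?_, ?_⟩
  · rw [hθ, cos_sub_int_mul_pi, ← hz, mul_left_comm, Complex.norm_mul_cos_arg, hre]
  · rw [hθ, sin_sub_int_mul_pi, ← hz, mul_left_comm, Complex.norm_mul_sin_arg, him]

lemma exists_isDDTraj_reaching {wmax ρ : ℝ} (hw : 0 < wmax) (hρ : 0 < ρ) (p : Plane) (θ₀ : ℝ)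
    (q : Plane) : ∃ x y θ : ℝ → ℝ, IsDDTraj wmax ρ x y θ ∧
      x 0 = p 0 ∧ y 0 = p 1 ∧ θ 0 = θ₀ ∧
      x (‖p - q‖ / wmax + π * ρ / (2 * wmax)) = q 0 ∧
      y (‖p - q‖ / wmax + π * ρ / (2 * wmax)) = q 1 := by
  obtain ⟨δ, s, hδ, hs, hcos, hsin⟩ := exists_heading_parallel θ₀ (q - p)
  simp only [PiLp.sub_apply] at hcos hsin
  set t₁ := π * ρ / (2 * wmax)
  have ht₁ : 0 ≤ t₁ := by positivity
  have hu : |2 * δ * wmax / π| ≤ wmax := by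
    rw [abs_div, abs_mul, abs_mul, abs_two, abs_of_pos hw, abs_of_pos pi_pos,
      div_le_iff₀ pi_pos]
    nlinarith [mul_le_mul_of_nonneg_right hδ hw.le]
  have hv : |s * wmax| ≤ wmax := by rw [abs_mul, hs, one_mul, abs_of_pos hw]
  have hturn : 2 * δ * wmax / π / ρ * t₁ = δ := by
    simp only [t₁]; field_simp
  have hreach : ∀ a b c : ℝ, ‖q - p‖ * c = s * (b - a) →
      a + s * wmax * c * (‖q - p‖ / wmax) = b := by
    intro a b c h
    calc a + s * wmax * c * (‖q - p‖ / wmax) = a + s * (‖q - p‖ * c) := by field_simp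
      _ = b := by rw [h, ← mul_assoc, ← abs_mul_abs_self, hs]; ring
  have hdrive : ‖p - q‖ / wmax + t₁ - min (‖p - q‖ / wmax + t₁) t₁ = ‖q - p‖ / wmax := by
    rw [min_eq_right (le_add_of_nonneg_left (by positivity)), norm_sub_rev]; ring
  refine ⟨_, _, _, isDDTraj_rotate_then_drive ρ hu hv (p 0) (p 1) θ₀ t₁,
    by simp [min_eq_left ht₁], by simp [min_eq_left ht₁], by simp [min_eq_left ht₁], ?_, ?_⟩
  · simpa only [hturn, hdrive] using hreach _ _ _ hcos
  · simpa only [hturn, hdrive] using hreach _ _ _ hsin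

lemma tauDD_le {wmax ρ : ℝ} {p : Plane} {θ₀ : ℝ} {q : Plane} {T : ℝ} (hT : 0 ≤ T)
    (h : ∃ x y θ : ℝ → ℝ, IsDDTraj wmax ρ x y θ ∧
      x 0 = p 0 ∧ y 0 = p 1 ∧ θ 0 = θ₀ ∧ x T = q 0 ∧ y T = q 1) :
    tauDD wmax ρ p θ₀ q ≤ T :=
  csInf_le ⟨0, fun _ hS => hS.1⟩ ⟨hT, h⟩

/-- upper bound on the travel time of a DD robot: from any configuration
`(p, θ₀)` the point `q` is reachable within time `‖p-q‖/w_max + πρ/(2 w_max)`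
(rotate in place, then drive straight), so `τ_DD((p,θ₀),q)` is at most this quantity. -/
theorem dd_travel_time_upper_bound
    (wmax ρ : ℝ) (hw : 0 < wmax) (hρ : 0 < ρ) (p : Plane) (θ₀ : ℝ) (q : Plane) :
    (∃ T : ℝ, 0 ≤ T ∧ T ≤ ‖p - q‖ / wmax + π * ρ / (2 * wmax) ∧
      ∃ x y θ : ℝ → ℝ, IsDDTraj wmax ρ x y θ ∧
        x 0 = p 0 ∧ y 0 = p 1 ∧ θ 0 = θ₀ ∧ x T = q 0 ∧ y T = q 1) ∧
    tauDD wmax ρ p θ₀ q ≤ ‖p - q‖ / wmax + π * ρ / (2 * wmax) := by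
  have hT : 0 ≤ ‖p - q‖ / wmax + π * ρ / (2 * wmax) := by positivity
  have hreach := exists_isDDTraj_reaching hw hρ p θ₀ q
  exact ⟨⟨_, hT, le_rfl, hreach⟩, tauDD_le hT hreach⟩
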